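/- arXiv:2412.11684 — 9 statements merged into one kernel-verified Lean document; each statement's English description precedes it below -/
import Mathlib

section
/- Let x ∈ ℤⁿ and let y ∈ ℤⁿ with y₁ ≥ a be such that f₁(x) ≤ f₁(y); then f(x) ⪯ f(y). Similarly, let x ∈ ℤⁿ and let y ∈ ℤⁿ with y₁ ≤ −a be such that f₂(x) ≤ f₂(y); then f(x) ⪯ f(y). -/
namespace EvoMO

/-- Search points: integer vectors of dimension `n`. -/
abbrev Pt (n : ℕ) := Fin n → ℤ

/-- The bi-objective benchmark function
`f(x) = (|x₁ − a| + Σ_{i≥2} |x_i|, |x₁ + a| + Σ_{i≥2} |x_i|)`. -/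
def benchf (n a : ℕ) [NeZero n] (x : Pt n) : ℤ × ℤ :=
  (|x 0 - (a : ℤ)| + ∑ i ∈ Finset.univ.erase (0 : Fin n), |x i|,
   |x 0 + (a : ℤ)| + ∑ i ∈ Finset.univ.erase (0 : Fin n), |x i|)

/-- Weak dominance (for minimization): `u ⪯ v`. -/
def dominates (u v : ℤ × ℤ) : Prop := u.1 ≤ v.1 ∧ u.2 ≤ v.2

/-- Strict dominance: `u ≺ v`. -/
def sdominates (u v : ℤ × ℤ) : Prop := dominates u v ∧ u ≠ v

/-- L1-norm of an integer vector. -/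
def l1 {n : ℕ} (x : Pt n) : ℤ := ∑ i, |x i|

/-- The Pareto front `F*` of the benchmark function. -/
def paretoFront (n a : ℕ) [NeZero n] : Set (ℤ × ℤ) :=
  {p | ∃ y : Pt n, benchf n a y = p ∧ ¬ ∃ x : Pt n, sdominates (benchf n a x) (benchf n a y)}

instance (u v : ℤ × ℤ) : Decidable (dominates u v) := by
  unfold dominates; infer_instance

instance (u v : ℤ × ℤ) : Decidable (sdominates u v) := by
  unfold sdominates; infer_instance

end EvoMO

/-!
By the triangle inequality `|x₁ + a| ≤ |x₁ − a| + 2a`, so `f₂ ≤ f₁ + 2a` everywhere, with equality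
on the half-space `x₁ ≥ a`. Hence for `y₁ ≥ a`, `f₂(x) ≤ f₁(x) + 2a ≤ f₁(y) + 2a = f₂(y)`; the case
`y₁ ≤ −a` is the mirror image.
-/

namespace EvoMO

variable {n : ℕ} [NeZero n] (a : ℕ) (x : Pt n)

theorem benchf_snd_le_fst_add : (benchf n a x).2 ≤ (benchf n a x).1 + 2 * a := by
  have : |x 0 + a| ≤ |x 0 - a| + 2 * a :=
    calc |x 0 + a| = |(x 0 - a) + 2 * a| := by ring_nf
      _ ≤ |x 0 - a| + |2 * (a : ℤ)| := abs_add_le _ _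
      _ = |x 0 - a| + 2 * a := by rw [abs_of_nonneg (by positivity : (0 : ℤ) ≤ 2 * a)]
  simp only [benchf]
  linarith

theorem benchf_fst_le_snd_add : (benchf n a x).1 ≤ (benchf n a x).2 + 2 * a := by
  have : |x 0 - a| ≤ |x 0 + a| + 2 * a :=
    calc |x 0 - a| = |(x 0 + a) - 2 * a| := by ring_nf
      _ ≤ |x 0 + a| + |2 * (a : ℤ)| := abs_sub _ _
      _ = |x 0 + a| + 2 * a := by rw [abs_of_nonneg (by positivity : (0 : ℤ) ≤ 2 * a)]
  simp only [benchf]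
  linarith

variable {a x}

theorem benchf_snd_eq_fst_add (h : (a : ℤ) ≤ x 0) :
    (benchf n a x).2 = (benchf n a x).1 + 2 * a := by
  simp only [benchf, abs_of_nonneg (by omega : 0 ≤ x 0 - a), abs_of_nonneg (by omega : 0 ≤ x 0 + a)]
  ring

theorem benchf_fst_eq_snd_add (h : x 0 ≤ -(a : ℤ)) :
    (benchf n a x).1 = (benchf n a x).2 + 2 * a := by
  simp only [benchf, abs_of_nonpos (by omega : x 0 - a ≤ 0), abs_of_nonpos (by omega : x 0 + a ≤ 0)]
  ring

end EvoMO

open EvoMO in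
theorem always_comparable_outside_general (n a : ℕ) [NeZero n] (x y : Pt n) :
    ((a : ℤ) ≤ y 0 → (benchf n a x).1 ≤ (benchf n a y).1 →
      dominates (benchf n a x) (benchf n a y)) ∧
    (y 0 ≤ -(a : ℤ) → (benchf n a x).2 ≤ (benchf n a y).2 →
      dominates (benchf n a x) (benchf n a y)) := by
  refine ⟨fun hy h₁ => ⟨h₁, ?_⟩, fun hy h₂ => ⟨?_, h₂⟩⟩
  · calc (benchf n a x).2 ≤ (benchf n a x).1 + 2 * a := benchf_snd_le_fst_add a x
      _ ≤ (benchf n a y).1 + 2 * a := by gcongr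
      _ = (benchf n a y).2 := (benchf_snd_eq_fst_add hy).symm
  · calc (benchf n a x).1 ≤ (benchf n a x).2 + 2 * a := benchf_fst_le_snd_add a x
      _ ≤ (benchf n a y).2 + 2 * a := by gcongr
      _ = (benchf n a y).1 := (benchf_fst_eq_snd_add hy).symm

open EvoMO in
/-- **Lemma 1.** If `y₁ ≥ a` and `f₁(x) ≤ f₁(y)`, then `f(x) ⪯ f(y)`; similarly, if
`y₁ ≤ −a` and `f₂(x) ≤ f₂(y)`, then `f(x) ⪯ f(y)`. -/
theorem always_comparable_outside (n a : ℕ) [NeZero n] (hn : 2 ≤ n) (x y : Pt n) :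
    ((a : ℤ) ≤ y 0 → (benchf n a x).1 ≤ (benchf n a y).1 →
      dominates (benchf n a x) (benchf n a y)) ∧
    (y 0 ≤ -(a : ℤ) → (benchf n a x).2 ≤ (benchf n a y).2 →
      dominates (benchf n a x) (benchf n a y)) :=
  always_comparable_outside_general n a x y
end

section
/- Let P ⊆ ℤⁿ be an f-antichain. Then P contains at most one point x with x₁ ≥ a, and P contains at most one point x with x₁ ≤ −a. In particular, this holds for every population of the SEMO or GSEMO optimizing f. -/
namespace EvoMO

/-- A set of search points is an `f`-antichain if no point in it weakly dominates
another (distinct) point in it. In particular, every population maintained by the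
SEMO/GSEMO is an `f`-antichain. -/
def IsFAntichain (n a : ℕ) [NeZero n] (P : Set (Pt n)) : Prop :=
  ∀ x ∈ P, ∀ y ∈ P, x ≠ y → ¬ dominates (benchf n a x) (benchf n a y)

end EvoMO

namespace EvoMO

theorem dominates_or_dominates_of_snd_sub_fst_eq {u v : ℤ × ℤ} (h : u.2 - u.1 = v.2 - v.1) :
    dominates u v ∨ dominates v u := by
  unfold dominates
  rcases le_total u.1 v.1 with h₁ | h₁
  · exact Or.inl ⟨h₁, by linarith⟩
  · exact Or.inr ⟨h₁, by linarith⟩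

variable {n a : ℕ} [NeZero n]

theorem IsFAntichain.eq_of_snd_sub_fst_eq {P : Set (Pt n)} (hP : IsFAntichain n a P)
    {x y : Pt n} (hx : x ∈ P) (hy : y ∈ P)
    (h : (benchf n a x).2 - (benchf n a x).1 = (benchf n a y).2 - (benchf n a y).1) :
    x = y := by
  by_contra hne
  rcases dominates_or_dominates_of_snd_sub_fst_eq h with hxy | hyx
  · exact hP x hx y hy hne hxy
  · exact hP y hy x hx (Ne.symm hne) hyx

theorem benchf_snd_sub_fst_of_le {x : Pt n} (hx : (a : ℤ) ≤ x 0) :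
    (benchf n a x).2 - (benchf n a x).1 = 2 * a := by
  simp only [benchf, abs_of_nonneg (sub_nonneg.mpr hx),
    abs_of_nonneg (show 0 ≤ x 0 + a by omega)]
  ring

theorem benchf_snd_sub_fst_of_le_neg {x : Pt n} (hx : x 0 ≤ -(a : ℤ)) :
    (benchf n a x).2 - (benchf n a x).1 = -(2 * a) := by
  simp only [benchf, abs_of_nonpos (show x 0 - a ≤ 0 by omega),
    abs_of_nonpos (show x 0 + a ≤ 0 by omega)]
  ring

end EvoMO

open EvoMO in
theorem antichain_outside_general (n a : ℕ) [NeZero n] (P : Set (Pt n))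
    (hP : IsFAntichain n a P) :
    (∀ x ∈ P, ∀ y ∈ P, (a : ℤ) ≤ x 0 → (a : ℤ) ≤ y 0 → x = y) ∧
    (∀ x ∈ P, ∀ y ∈ P, x 0 ≤ -(a : ℤ) → y 0 ≤ -(a : ℤ) → x = y) := by
  refine ⟨fun x hx y hy hxa hya => ?_, fun x hx y hy hxa hya => ?_⟩
  · exact hP.eq_of_snd_sub_fst_eq hx hy
      (by rw [benchf_snd_sub_fst_of_le hxa, benchf_snd_sub_fst_of_le hya])
  · exact hP.eq_of_snd_sub_fst_eq hx hy
      (by rw [benchf_snd_sub_fst_of_le_neg hxa, benchf_snd_sub_fst_of_le_neg hya])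

open EvoMO in
/-- **Lemma 2.** An `f`-antichain `P ⊆ ℤⁿ` contains at most one point `x` with
`x₁ ≥ a`, and at most one point `x` with `x₁ ≤ −a`. -/
theorem antichain_outside (n a : ℕ) [NeZero n] (hn : 2 ≤ n) (P : Set (Pt n))
    (hP : IsFAntichain n a P) :
    (∀ x ∈ P, ∀ y ∈ P, (a : ℤ) ≤ x 0 → (a : ℤ) ≤ y 0 → x = y) ∧
    (∀ x ∈ P, ∀ y ∈ P, x 0 ≤ -(a : ℤ) → y 0 ≤ -(a : ℤ) → x = y) :=
  antichain_outside_general n a P hP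
end

section
/- Let P ⊆ ℤⁿ be an f-antichain and let i ∈ ℤ with −a ≤ i ≤ a. Then P contains at most one point x with x₁ = i. -/
namespace EvoMO

theorem benchf_dominates_or_dominates_of_apply_zero_eq {n : ℕ} (a : ℕ) [NeZero n]
    {x y : Pt n} (h : x 0 = y 0) :
    dominates (benchf n a x) (benchf n a y) ∨ dominates (benchf n a y) (benchf n a x) := by
  simp only [dominates, benchf, h]
  rcases le_total (∑ j ∈ Finset.univ.erase (0 : Fin n), |x j|)
      (∑ j ∈ Finset.univ.erase (0 : Fin n), |y j|) with hle | hle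
  · exact Or.inl ⟨by gcongr, by gcongr⟩
  · exact Or.inr ⟨by gcongr, by gcongr⟩

end EvoMO

open EvoMO in
theorem antichain_at_most_one_per_value_general (n a : ℕ) [NeZero n]
    (P : Set (Pt n)) (hP : IsFAntichain n a P) (i : ℤ) :
    ∀ x ∈ P, ∀ y ∈ P, x 0 = i → y 0 = i → x = y := by
  intro x hx y hy hxi hyi
  by_contra hne
  rcases benchf_dominates_or_dominates_of_apply_zero_eq a (hxi.trans hyi.symm) with hxy | hyx
  · exact hP x hx y hy hne hxy
  · exact hP y hy x hx (Ne.symm hne) hyx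

open EvoMO in
/-- **Lemma 3.** For every `i ∈ [−a, a]`, an `f`-antichain `P ⊆ ℤⁿ` contains at most
one point `x` with `x₁ = i`. -/
theorem antichain_at_most_one_per_value (n a : ℕ) [NeZero n] (hn : 2 ≤ n)
    (P : Set (Pt n)) (hP : IsFAntichain n a P) (i : ℤ) (hi : -(a : ℤ) ≤ i ∧ i ≤ a) :
    ∀ x ∈ P, ∀ y ∈ P, x 0 = i → y 0 = i → x = y :=
  antichain_at_most_one_per_value_general n a P hP i
end

section
/- Every f-antichain P ⊆ ℤⁿ has cardinality at most 2a + 1. In particular, every population of the SEMO or GSEMO optimizing f has at most 2a + 1 individuals. -/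
open EvoMO in
/-- **Lemma 4.** Every `f`-antichain `P ⊆ ℤⁿ` is finite with at most `2a + 1` elements.
In particular, every population of the SEMO/GSEMO has at most `2a + 1` individuals. -/
theorem antichain_card_le (n a : ℕ) [NeZero n] (hn : 2 ≤ n) (P : Set (Pt n))
    (hP : IsFAntichain n a P) :
    P.Finite ∧ P.ncard ≤ 2 * a + 1 := by
  set g : Pt n → ℤ := fun x => min (a : ℤ) (max (-(a : ℤ)) (x 0)) with hg
  have key : ∀ x : Pt n, (benchf n a x).2 - (benchf n a x).1 = 2 * g x := by
    intro x
    simp only [benchf, hg]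
    have h1 := abs_cases (x 0 + (a : ℤ))
    have h2 := abs_cases (x 0 - (a : ℤ))
    omega
  have hinj : Set.InjOn g P := by
    intro x hx y hy hgxy
    by_contra hne
    have hx2 := key x
    have hy2 := key y
    rw [hgxy] at hx2
    rcases le_total (benchf n a x).1 (benchf n a y).1 with h | h
    · exact hP x hx y hy hne ⟨h, by omega⟩
    · exact hP y hy x hx (Ne.symm hne) ⟨h, by omega⟩
  have hsub : g '' P ⊆ Set.Icc (-(a : ℤ)) a := by
    rintro _ ⟨x, _, rfl⟩
    simp only [hg, Set.mem_Icc]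
    constructor
    · exact le_min (by omega) (le_max_left _ _)
    · exact min_le_left _ _
  have hIcc : (Set.Icc (-(a : ℤ)) a).Finite := Set.finite_Icc _ _
  have himg : (g '' P).Finite := hIcc.subset hsub
  have hfin : P.Finite := Set.Finite.of_finite_image himg hinj
  refine ⟨hfin, ?_⟩
  have h1 : P.ncard = (g '' P).ncard := (Set.ncard_image_of_injOn hinj).symm
  have h2 : (g '' P).ncard ≤ (Set.Icc (-(a : ℤ)) a).ncard :=
    Set.ncard_le_ncard hsub hIcc
  have h3 : (Set.Icc (-(a : ℤ)) a).ncard = 2 * a + 1 := by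
    rw [← Finset.coe_Icc, Set.ncard_coe_finset, Int.card_Icc]
    omega
  omega
end

section
/- Let x, y ∈ ℤⁿ. If f(x) ⪯ f(y), then ‖x‖₁ ≤ ‖y‖₁. -/
open EvoMO in
/-- **Lemma 5.** If `f(x) ⪯ f(y)`, then `‖x‖₁ ≤ ‖y‖₁`. -/
theorem dominance_implies_l1 (n a : ℕ) [NeZero n] (hn : 2 ≤ n) (x y : Pt n)
    (h : dominates (benchf n a x) (benchf n a y)) :
    l1 x ≤ l1 y := by
  obtain ⟨h1, h2⟩ := h
  simp only [benchf] at h1 h2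
  have e : ∀ z : Pt n, l1 z = |z 0| + ∑ i ∈ Finset.univ.erase (0 : Fin n), |z i| := by
    intro z
    rw [l1, ← Finset.add_sum_erase _ _ (Finset.mem_univ (0 : Fin n))]
  rw [e x, e y]
  rcases le_or_gt 0 (x 0) with hx | hx
  · have hxa : |x 0 + (a : ℤ)| = |x 0| + a := by
      rw [abs_of_nonneg hx, abs_of_nonneg (by positivity)]
    have hya : |y 0 + (a : ℤ)| ≤ |y 0| + a := by
      calc |y 0 + (a : ℤ)| ≤ |y 0| + |(a : ℤ)| := abs_add_le _ _
        _ = |y 0| + a := by rw [Int.abs_natCast]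
    linarith
  · have hxa : |x 0 - (a : ℤ)| = |x 0| + a := by
      rw [abs_of_neg hx, abs_of_nonpos (by linarith [Int.ofNat_nonneg a])]
      ring
    have hya : |y 0 - (a : ℤ)| ≤ |y 0| + a := by
      calc |y 0 - (a : ℤ)| ≤ |y 0| + |(a : ℤ)| := abs_sub _ _
        _ = |y 0| + a := by rw [Int.abs_natCast]
    linarith
end

section
/- Let P ⊆ ℤⁿ be a finite nonempty set, let z* ∈ P satisfy ‖z*‖₁ = min_{z ∈ P} ‖z‖₁, and let y ∈ ℤⁿ with ‖y‖₁ > ‖z*‖₁. Then z* ∈ update(P, y), i.e., the element of minimum L1-norm survives one population-update step of the SEMO/GSEMO with offspring y. -/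
namespace EvoMO

/-- One population-update step of the (G)SEMO with offspring `y`: remove all points
weakly dominated by `y` and add `y` unless it is strictly dominated by a remaining
point. -/
def update (n a : ℕ) [NeZero n] (P : Finset (Pt n)) (y : Pt n) :
    Finset (Pt n) :=
  let Q := P.filter fun z => ¬ dominates (benchf n a y) (benchf n a z)
  if ∃ z ∈ Q, sdominates (benchf n a z) (benchf n a y) then Q else insert y Q

end EvoMO

open EvoMO in
/-- **Lemma 6.** If `z*` has minimum L1-norm in the (finite, nonempty) population `P`
and the offspring `y` satisfies `‖y‖₁ > ‖z*‖₁`, then `z*` survives the population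
update, i.e. `z* ∈ update(P, y)`. -/
theorem min_l1_survives_update (n a : ℕ) [NeZero n] (hn : 2 ≤ n)
    (P : Finset (Pt n)) (hne : P.Nonempty) (zstar : Pt n) (hz : zstar ∈ P)
    (hmin : ∀ z ∈ P, l1 zstar ≤ l1 z) (y : Pt n) (hy : l1 zstar < l1 y) :
    zstar ∈ update n a P y := by
  have key : ¬ dominates (benchf n a y) (benchf n a zstar) := by
    rintro ⟨h1, h2⟩
    set Sy := ∑ i ∈ Finset.univ.erase (0 : Fin n), |y i| with hSy
    set Sz := ∑ i ∈ Finset.univ.erase (0 : Fin n), |zstar i| with hSz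
    have hly : l1 y = |y 0| + Sy :=
      (Finset.add_sum_erase Finset.univ (fun i => |y i|) (Finset.mem_univ (0 : Fin n))).symm
    have hlz : l1 zstar = |zstar 0| + Sz :=
      (Finset.add_sum_erase Finset.univ (fun i => |zstar i|) (Finset.mem_univ (0 : Fin n))).symm
    simp only [benchf, dominates] at h1 h2
    have ha : (0 : ℤ) ≤ (a : ℤ) := Int.natCast_nonneg a
    rcases le_or_gt 0 (y 0) with hy0 | hy0
    · have e1 : |y 0 + (a : ℤ)| = |y 0| + a := by
        rw [abs_of_nonneg hy0, abs_of_nonneg (by linarith)]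
      have e2 : |zstar 0 + (a : ℤ)| ≤ |zstar 0| + a := by
        calc |zstar 0 + (a : ℤ)| ≤ |zstar 0| + |(a : ℤ)| := abs_add_le _ _
          _ = |zstar 0| + a := by rw [abs_of_nonneg ha]
      have : l1 y ≤ l1 zstar := by
        rw [hly, hlz]; linarith [h2]
      linarith
    · have e1 : |y 0 - (a : ℤ)| = |y 0| + a := by
        rw [abs_of_nonpos (by linarith), abs_of_neg hy0]; ring
      have e2 : |zstar 0 - (a : ℤ)| ≤ |zstar 0| + a := by
        calc |zstar 0 - (a : ℤ)| ≤ |zstar 0| + |(a : ℤ)| := abs_sub _ _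
          _ = |zstar 0| + a := by rw [abs_of_nonneg ha]
      have : l1 y ≤ l1 zstar := by
        rw [hly, hlz]; linarith [h1]
      linarith
  have hQ : zstar ∈ P.filter fun z => ¬ dominates (benchf n a y) (benchf n a z) :=
    Finset.mem_filter.mpr ⟨hz, key⟩
  unfold update
  dsimp only
  split_ifs
  · exact hQ
  · exact Finset.mem_insert_of_mem hQ
end

section
/- For every constant C ∈ (0,1) there exists a constant K > 0 such that for all q ∈ (0, C] and all z ∈ ℕ, Σ_{k=0}^{z} k·(q/(2−q))·(1−q)^{k} ≥ K·min{ z²·q, 1/(4q) }. -/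
private lemma gauss_sum_real (n : ℕ) :
    ∑ k ∈ Finset.range (n + 1), (k : ℝ) = n * (n + 1) / 2 := by
  induction n with
  | zero => simp
  | succ n ih =>
    rw [Finset.sum_range_succ, ih]
    push_cast
    ring

/-- Lower bound for the truncated sum when `n*q ≤ 1/2`. -/
private lemma aux_small (q : ℝ) (hq0 : 0 < q) (hq1 : q < 1) (n : ℕ)
    (hn : (n : ℝ) * q ≤ 1 / 2) :
    (n : ℝ) ^ 2 * q / 8 ≤ ∑ k ∈ Finset.range (n + 1), (k : ℝ) * (q / (2 - q)) * (1 - q) ^ k := by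
  have h2q : (0 : ℝ) < 2 - q := by linarith
  have hr0 : (0 : ℝ) ≤ 1 - q := by linarith
  have hr1 : (1 : ℝ) - q ≤ 1 := by linarith
  have hpow : (1 / 2 : ℝ) ≤ (1 - q) ^ n := by
    have := one_add_mul_le_pow (a := -q) (by linarith) n
    have h' : 1 - (n : ℝ) * q ≤ (1 - q) ^ n := by
      calc (1 : ℝ) - n * q = 1 + (n : ℝ) * (-q) := by ring
        _ ≤ (1 + -q) ^ n := this
        _ = (1 - q) ^ n := by ring_nf
    linarith
  have hdiv : q / 2 ≤ q / (2 - q) :=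
    div_le_div_of_nonneg_left hq0.le h2q (by linarith)
  have key : ∀ k ∈ Finset.range (n + 1),
      (k : ℝ) * (q / 2) * (1 / 2) ≤ (k : ℝ) * (q / (2 - q)) * (1 - q) ^ k := by
    intro k hk
    have hk' : k ≤ n := by
      have := Finset.mem_range.1 hk; omega
    have hpk : (1 / 2 : ℝ) ≤ (1 - q) ^ k := by
      calc (1 / 2 : ℝ) ≤ (1 - q) ^ n := hpow
        _ ≤ (1 - q) ^ k := pow_le_pow_of_le_one hr0 hr1 hk'
    have h1 : (k : ℝ) * (q / 2) ≤ (k : ℝ) * (q / (2 - q)) :=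
      mul_le_mul_of_nonneg_left hdiv (Nat.cast_nonneg k)
    have h2 : (0 : ℝ) ≤ (k : ℝ) * (q / 2) := by positivity
    calc (k : ℝ) * (q / 2) * (1 / 2) ≤ (k : ℝ) * (q / (2 - q)) * (1 / 2) := by
          apply mul_le_mul_of_nonneg_right h1; norm_num
      _ ≤ (k : ℝ) * (q / (2 - q)) * (1 - q) ^ k := by
          apply mul_le_mul_of_nonneg_left hpk
          positivity
  have hsum := Finset.sum_le_sum key
  have hleft : ∑ k ∈ Finset.range (n + 1), (k : ℝ) * (q / 2) * (1 / 2)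
      = (n * (n + 1) / 2) * (q / 4) := by
    have : ∑ k ∈ Finset.range (n + 1), (k : ℝ) * (q / 2) * (1 / 2)
        = (∑ k ∈ Finset.range (n + 1), (k : ℝ)) * (q / 4) := by
      rw [Finset.sum_mul]
      apply Finset.sum_congr rfl
      intro k _
      ring
    rw [this, gauss_sum_real]
  rw [hleft] at hsum
  have hn2 : (n : ℝ) ^ 2 ≤ (n : ℝ) * ((n : ℝ) + 1) := by nlinarith [Nat.cast_nonneg (α := ℝ) n]
  nlinarith [hsum, hq0.le]

/-- **Lemma 9 (lower bound on the truncated expectation).** For every constant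
`C ∈ (0,1)` there is a constant `K > 0` such that for all `q ∈ (0, C]` and all `z ∈ ℕ`,
`Σ_{k=0}^{z} k·(q/(2−q))·(1−q)^k ≥ K·min{z²q, 1/(4q)}`. -/
theorem truncated_bilateral_geometric_lower_bound (C : ℝ) (hC : C ∈ Set.Ioo (0 : ℝ) 1) :
    ∃ K : ℝ, 0 < K ∧
      ∀ q : ℝ, q ∈ Set.Ioc (0 : ℝ) C → ∀ z : ℕ,
        K * min ((z : ℝ) ^ 2 * q) (1 / (4 * q))
          ≤ ∑ k ∈ Finset.range (z + 1), (k : ℝ) * (q / (2 - q)) * (1 - q) ^ k := by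
  obtain ⟨hC0, hC1⟩ := hC
  refine ⟨min (1 / 32) ((1 - C) / 2), lt_min (by norm_num) (by linarith), ?_⟩
  intro q ⟨hq0, hqC⟩ z
  have hq1 : q < 1 := lt_of_le_of_lt hqC hC1
  have h2q : (0 : ℝ) < 2 - q := by linarith
  have hr0 : (0 : ℝ) ≤ 1 - q := by linarith
  set K := min (1 / 32 : ℝ) ((1 - C) / 2) with hK
  have hK1 : K ≤ 1 / 32 := min_le_left _ _
  have hK2 : K ≤ (1 - C) / 2 := min_le_right _ _
  have hKpos : (0 : ℝ) < K := by
    apply lt_min <;> [norm_num; linarith]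
  have hterm : ∀ k : ℕ, (0 : ℝ) ≤ (k : ℝ) * (q / (2 - q)) * (1 - q) ^ k := by
    intro k
    apply mul_nonneg (mul_nonneg (Nat.cast_nonneg k) (div_nonneg hq0.le h2q.le))
    exact pow_nonneg hr0 k
  rcases le_or_gt ((z : ℝ) * q) (1 / 2) with hzq | hzq
  · -- Case 1: small z: min is z²q
    have hmin : min ((z : ℝ) ^ 2 * q) (1 / (4 * q)) = (z : ℝ) ^ 2 * q := by
      apply min_eq_left
      rw [le_div_iff₀ (by positivity)]
      nlinarith [mul_nonneg (Nat.cast_nonneg (α := ℝ) z) hq0.le]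
    rw [hmin]
    calc K * ((z : ℝ) ^ 2 * q) ≤ (1 / 8) * ((z : ℝ) ^ 2 * q) := by
          apply mul_le_mul_of_nonneg_right (by linarith) (by positivity)
      _ = (z : ℝ) ^ 2 * q / 8 := by ring
      _ ≤ _ := aux_small q hq0 hq1 z hzq
  · -- Case 2: large z: min is 1/(4q)
    have hmin : min ((z : ℝ) ^ 2 * q) (1 / (4 * q)) = 1 / (4 * q) := by
      apply min_eq_right
      rw [div_le_iff₀ (by positivity)]
      nlinarith [hzq, Nat.cast_nonneg (α := ℝ) z]
    rw [hmin]
    rcases le_or_gt q (1 / 2) with hqh | hqh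
    · -- Subcase 2a: q ≤ 1/2, use m = ⌊1/(2q)⌋
      set m := ⌊1 / (2 * q)⌋₊ with hm
      have hx1 : (1 : ℝ) ≤ 1 / (2 * q) := by
        rw [le_div_iff₀ (by positivity)]; linarith
      have hm1 : 1 ≤ m := Nat.le_floor (by exact_mod_cast hx1)
      have hmle : (m : ℝ) ≤ 1 / (2 * q) := Nat.floor_le (by positivity)
      have hmlt : 1 / (2 * q) < (m : ℝ) + 1 := Nat.lt_floor_add_one _
      have hzgt : 1 / (2 * q) < (z : ℝ) := by
        rw [div_lt_iff₀ (by positivity)]; linarith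
      have hmz : m ≤ z := by
        have : (m : ℝ) < (z : ℝ) := lt_of_le_of_lt hmle hzgt
        exact_mod_cast this.le
      have hmq : (m : ℝ) * q ≤ 1 / 2 := by
        have := (le_div_iff₀ (by positivity : (0:ℝ) < 2 * q)).1 hmle
        linarith
      have hm4' : (1 : ℝ) ≤ 4 * q * (m : ℝ) := by
        have hm1' : (1 : ℝ) ≤ (m : ℝ) := by exact_mod_cast hm1
        have h2m : 1 / (2 * q) < 2 * (m : ℝ) := by linarith
        have := (div_lt_iff₀ (by positivity : (0:ℝ) < 2 * q)).1 h2m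
        nlinarith
      calc K * (1 / (4 * q)) ≤ (1 / 32) * (1 / (4 * q)) := by
            apply mul_le_mul_of_nonneg_right hK1 (by positivity)
        _ ≤ (m : ℝ) ^ 2 * q / 8 := by
            rw [show (1 : ℝ) / 32 * (1 / (4 * q)) = 1 / (128 * q) by ring,
              div_le_div_iff₀ (by positivity) (by norm_num)]
            nlinarith [hm4', sq_nonneg (4 * q * (m : ℝ) - 1)]
        _ ≤ ∑ k ∈ Finset.range (m + 1), (k : ℝ) * (q / (2 - q)) * (1 - q) ^ k :=
            aux_small q hq0 hq1 m hmq
        _ ≤ ∑ k ∈ Finset.range (z + 1), (k : ℝ) * (q / (2 - q)) * (1 - q) ^ k := by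
            apply Finset.sum_le_sum_of_subset_of_nonneg
              (Finset.range_subset_range.2 (by omega))
            intro i _ _
            exact hterm i
    · -- Subcase 2b: q > 1/2, use the k = 1 term
      have hz1 : 1 ≤ z := by
        rcases Nat.eq_zero_or_pos z with h | h
        · exfalso; rw [h] at hzq; simp at hzq; linarith
        · exact h
      have hsingle : (1 : ℝ) * (q / (2 - q)) * (1 - q) ^ 1
          ≤ ∑ k ∈ Finset.range (z + 1), (k : ℝ) * (q / (2 - q)) * (1 - q) ^ k := by
        have := Finset.single_le_sum (f := fun k : ℕ => (k : ℝ) * (q / (2 - q)) * (1 - q) ^ k)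
          (fun i _ => hterm i) (Finset.mem_range.2 (by omega : 1 < z + 1))
        simpa using this
      have h14 : 1 / (4 * q) ≤ 1 / 2 := by
        rw [div_le_div_iff₀ (by positivity) (by norm_num)]
        linarith
      have step1 : K * (1 / (4 * q)) ≤ ((1 - C) / 2) * (1 / 2) :=
        mul_le_mul hK2 h14 (by positivity) (by linarith)
      have step2 : ((1 - C) / 2) * (1 / 2) ≤ q * (1 - q) / 2 := by
        have h1 : q * (1 - C) ≤ q * (1 - q) :=
          mul_le_mul_of_nonneg_left (by linarith) hq0.le
        have h2 : (1 / 2 : ℝ) * (1 - C) ≤ q * (1 - C) :=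
          mul_le_mul_of_nonneg_right (by linarith) (by linarith)
        linarith
      have step3 : q * (1 - q) / 2 ≤ (1 : ℝ) * (q / (2 - q)) * (1 - q) ^ 1 := by
        have hdiv : q / 2 ≤ q / (2 - q) :=
          div_le_div_of_nonneg_left hq0.le h2q (by linarith)
        have := mul_le_mul_of_nonneg_right hdiv hr0
        calc q * (1 - q) / 2 = (q / 2) * (1 - q) := by ring
          _ ≤ (q / (2 - q)) * (1 - q) := this
          _ = (1 : ℝ) * (q / (2 - q)) * (1 - q) ^ 1 := by ring
      linarith
end

section
/- (Discrete variable drift, upper bound.) Let n ∈ ℕ, let (X_t)_{t≥0} be a sequence of random variables taking values in {0, 1, …, n}, adapted to a filtration (F_t)_{t≥0}, with X₀ = x₀ almost surely for a fixed x₀ ∈ {0, …, n}, and let T be the earliest time t ≥ 0 with X_t = 0. Suppose there exists a monotonically increasing function h : {1, …, n} → ℝ_{>0} such that for every t ∈ ℕ, almost surely on the event {t < T}, E[X_t − X_{t+1} | F_t] ≥ h(X_t). Then E[T] ≤ Σ_{i=1}^{x₀} 1/h(i). -/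
open MeasureTheory

/-!
The potential `g x = ∑_{i=1}^{x} 1 / h i` is concave with slope `1 / h x` at `x`, so
`g (X t) - g (X (t+1)) ≥ (X t - X (t+1)) / h (X t)`. Pulling the `ℱ t`-measurable weight
`1 / h (X t)` out of the conditional expectation turns the drift `h (X t)` of `X` into a drift
of at least `1` of `g (X)` on `{t < T}`. Since `g 0 = 0`, this reads
`Pr[T > t] ≤ E[g (X t); T > t] - E[g (X (t+1)); T > t+1]`, and summing over `t` telescopes to
`E[T] ≤ g x₀`.
-/

section ConditionalDrift

variable {Ω : Type*} {m m₀ : MeasurableSpace Ω} {μ : Measure Ω} [IsFiniteMeasure μ]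

theorem integral_mul_condExp_of_stronglyMeasurable_left (hm : m ≤ m₀) {w Y : Ω → ℝ}
    (hw : StronglyMeasurable[m] w) {C : ℝ} (hwC : ∀ ω, ‖w ω‖ ≤ C) (hY : Integrable Y μ) :
    ∫ ω, w ω * (μ[Y | m]) ω ∂μ = ∫ ω, w ω * Y ω ∂μ := by
  have hwY : Integrable (w * Y) μ :=
    hY.bdd_mul (hw.mono hm).aestronglyMeasurable (ae_of_all _ hwC)
  calc ∫ ω, w ω * (μ[Y | m]) ω ∂μ = ∫ ω, (μ[w * Y | m]) ω ∂μ :=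
        integral_congr_ae (condExp_mul_of_stronglyMeasurable_left hw hwY hY).symm
    _ = ∫ ω, w ω * Y ω ∂μ := integral_condExp hm

theorem measureReal_le_setIntegral_div_of_le_condExp (hm : m ≤ m₀) {s : Set Ω}
    (hs : MeasurableSet[m] s) {H Y : Ω → ℝ} (hH : Measurable[m] H) (hH_pos : ∀ ω ∈ s, 0 < H ω)
    {C : ℝ} (hH_inv : ∀ ω ∈ s, (H ω)⁻¹ ≤ C) (hY : Integrable Y μ)
    (hdrift : ∀ᵐ ω ∂μ, ω ∈ s → H ω ≤ (μ[Y | m]) ω) :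
    μ.real s ≤ ∫ ω in s, Y ω / H ω ∂μ := by
  set w := s.indicator fun ω => (H ω)⁻¹
  have hw : StronglyMeasurable[m] w := (hH.inv.indicator hs).stronglyMeasurable
  have hwC : ∀ ω, ‖w ω‖ ≤ max C 0 := by
    intro ω
    by_cases hω : ω ∈ s
    · simp only [w, Set.indicator_of_mem hω]
      rw [Real.norm_of_nonneg (inv_nonneg.2 (hH_pos ω hω).le)]
      exact (hH_inv ω hω).trans (le_max_left _ _)
    · simp [w, hω]
  have hcondExp_int : Integrable (fun ω => w ω * (μ[Y | m]) ω) μ :=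
    integrable_condExp.bdd_mul (hw.mono hm).aestronglyMeasurable (ae_of_all _ hwC)
  calc μ.real s = ∫ ω, s.indicator 1 ω ∂μ := (integral_indicator_one (hm s hs)).symm
    _ ≤ ∫ ω, w ω * (μ[Y | m]) ω ∂μ := by
        refine integral_mono_ae ((integrable_const 1).indicator (hm s hs)) hcondExp_int ?_
        filter_upwards [hdrift] with ω hω
        by_cases hωs : ω ∈ s
        · simp only [w, Set.indicator_of_mem hωs, Pi.one_apply]
          rw [← inv_mul_cancel₀ (hH_pos ω hωs).ne']
          exact mul_le_mul_of_nonneg_left (hω hωs) (inv_nonneg.2 (hH_pos ω hωs).le)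
        · simp [w, hωs]
    _ = ∫ ω, w ω * Y ω ∂μ := integral_mul_condExp_of_stronglyMeasurable_left hm hw hwC hY
    _ = ∫ ω in s, Y ω / H ω ∂μ := by
        rw [← integral_indicator (hm s hs)]
        congr with ω
        by_cases hωs : ω ∈ s <;> simp [w, hωs, div_eq_inv_mul]

end ConditionalDrift

section Potential

noncomputable def variableDriftPotential (h : ℕ → ℝ) (x : ℕ) : ℝ := ∑ i ∈ Finset.Icc 1 x, 1 / h i

variable {h : ℕ → ℝ} {n : ℕ}

@[simp]
theorem variableDriftPotential_zero : variableDriftPotential h 0 = 0 := by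
  simp [variableDriftPotential]

theorem variableDriftPotential_sub_of_le {x y : ℕ} (hyx : y ≤ x) :
    variableDriftPotential h x - variableDriftPotential h y = ∑ i ∈ Finset.Ioc y x, 1 / h i := by
  have hIcc (z : ℕ) : Finset.Icc 1 z = Finset.Ioc 0 z := Finset.Icc_add_one_left_eq_Ioc 0 z
  rw [variableDriftPotential, variableDriftPotential, hIcc, hIcc, sub_eq_iff_eq_add',
    Finset.sum_Ioc_consecutive _ (Nat.zero_le y) hyx]

theorem variableDriftPotential_nonneg (hpos : ∀ i, 1 ≤ i → i ≤ n → 0 < h i) {x : ℕ}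
    (hx : x ≤ n) : 0 ≤ variableDriftPotential h x :=
  Finset.sum_nonneg fun i hi =>
    (one_div_pos.2 (hpos i (Finset.mem_Icc.1 hi).1 ((Finset.mem_Icc.1 hi).2.trans hx))).le

theorem one_div_le_variableDriftPotential (hpos : ∀ i, 1 ≤ i → i ≤ n → 0 < h i) {k : ℕ}
    (hk : 1 ≤ k) (hkn : k ≤ n) : 1 / h k ≤ variableDriftPotential h n :=
  Finset.single_le_sum (f := fun i => 1 / h i)
    (fun i hi => (one_div_pos.2 (hpos i (Finset.mem_Icc.1 hi).1 (Finset.mem_Icc.1 hi).2)).le)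
    (Finset.mem_Icc.2 ⟨hk, hkn⟩)

/-- Concavity of the potential: its slopes `1 / h i` decrease. -/
theorem sub_div_le_variableDriftPotential_sub (hpos : ∀ i, 1 ≤ i → i ≤ n → 0 < h i)
    (hmono : ∀ i j, 1 ≤ i → i ≤ j → j ≤ n → h i ≤ h j) {x y : ℕ} (hx : 1 ≤ x) (hxn : x ≤ n)
    (hyn : y ≤ n) :
    ((x : ℝ) - y) / h x ≤ variableDriftPotential h x - variableDriftPotential h y := by
  have hslope {a b : ℕ} (hab : a ≤ b) :
      ∑ _i ∈ Finset.Ioc a b, 1 / h x = ((b : ℝ) - a) / h x := by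
    rw [Finset.sum_const, Nat.card_Ioc, nsmul_eq_mul, Nat.cast_sub hab, mul_one_div]
  rcases le_total y x with hyx | hxy
  · rw [variableDriftPotential_sub_of_le hyx, ← hslope hyx]
    refine Finset.sum_le_sum fun i hi => ?_
    obtain ⟨hyi, hix⟩ := Finset.mem_Ioc.1 hi
    have hi : 1 ≤ i := Nat.one_le_of_lt hyi
    exact one_div_le_one_div_of_le (hpos i hi (hix.trans hxn)) (hmono i x hi hix hxn)
  · rw [← neg_sub (variableDriftPotential h y), variableDriftPotential_sub_of_le hxy,
      ← neg_sub (y : ℝ), neg_div, neg_le_neg_iff, ← hslope hxy]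
    refine Finset.sum_le_sum fun i hi => ?_
    obtain ⟨hxi, hiy⟩ := Finset.mem_Ioc.1 hi
    exact one_div_le_one_div_of_le (hpos x hx hxn) (hmono x i hx hxi.le (hiy.trans hyn))

end Potential

theorem Finset.sum_range_le_of_le_sub_succ {α : Type*} [AddCommGroup α] [PartialOrder α]
    [IsOrderedAddMonoid α] {a b : ℕ → α} (hab : ∀ t, a t ≤ b t - b (t + 1)) {N : ℕ}
    (hbN : 0 ≤ b N) : ∑ t ∈ Finset.range N, a t ≤ b 0 :=
  calc ∑ t ∈ Finset.range N, a t ≤ ∑ t ∈ Finset.range N, (b t - b (t + 1)) :=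
        Finset.sum_le_sum fun t _ => hab t
    _ = b 0 - b N := Finset.sum_range_sub' b N
    _ ≤ b 0 := sub_le_self _ hbN

section HittingZero

variable {Ω : Type*} {m : MeasurableSpace Ω} {μ : Measure Ω}

theorem tsum_measure_le_ofReal_of_sum_measureReal_le [IsFiniteMeasure μ] {s : ℕ → Set Ω}
    {c : ℝ} (hsum : ∀ N, ∑ t ∈ Finset.range N, μ.real (s t) ≤ c) :
    ∑' t, μ (s t) ≤ ENNReal.ofReal c :=
  ENNReal.tsum_le_of_sum_range_le fun N =>
    calc ∑ t ∈ Finset.range N, μ (s t) = ENNReal.ofReal (∑ t ∈ Finset.range N, μ.real (s t)) := by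
          rw [ENNReal.ofReal_sum_of_nonneg fun t _ => measureReal_nonneg]
          exact Finset.sum_congr rfl fun t _ => (ofReal_measureReal).symm
      _ ≤ ENNReal.ofReal c := ENNReal.ofReal_le_ofReal (hsum N)

theorem integrable_comp_of_forall_mem_finset [IsFiniteMeasure μ] {α : Type*} [MeasurableSpace α]
    [Countable α] [MeasurableSingletonClass α] {Y : Ω → α} (hY : Measurable Y) {S : Finset α}
    (hYS : ∀ ω, Y ω ∈ S) (f : α → ℝ) : Integrable (fun ω => f (Y ω)) μ :=
  Integrable.of_bound ((measurable_of_countable f).comp hY).aestronglyMeasurable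
    (∑ a ∈ S, ‖f a‖) <| ae_of_all _ fun ω =>
      Finset.single_le_sum (f := fun a => ‖f a‖) (fun _ _ => norm_nonneg _) (hYS ω)

def avoidsZeroUntil (X : ℕ → Ω → ℕ) (t : ℕ) : Set Ω := {ω | ∀ s ≤ t, X s ω ≠ 0}

variable {X : ℕ → Ω → ℕ}

theorem avoidsZeroUntil_succ (t : ℕ) :
    avoidsZeroUntil X (t + 1) = avoidsZeroUntil X t ∩ {ω | X (t + 1) ω ≠ 0} := by
  ext ω
  simp [avoidsZeroUntil, Nat.le_succ_iff, or_imp, forall_and]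

theorem measurableSet_avoidsZeroUntil {ℱ : Filtration ℕ m} (hX : ∀ t, Measurable[ℱ t] (X t)) :
    ∀ t, MeasurableSet[ℱ t] (avoidsZeroUntil X t)
  | 0 => by
    have hA : avoidsZeroUntil X 0 = X 0 ⁻¹' {0}ᶜ := by ext; simp [avoidsZeroUntil]
    exact hA ▸ (hX 0) (measurableSet_singleton 0).compl
  | t + 1 => by
    rw [avoidsZeroUntil_succ]
    exact (ℱ.mono t.le_succ _ (measurableSet_avoidsZeroUntil hX t)).inter
      ((hX (t + 1)) (measurableSet_singleton 0).compl)

/-- Leaving `avoidsZeroUntil X` at time `t + 1` means `X (t + 1) = 0`, where `g` vanishes. -/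
theorem indicator_avoidsZeroUntil_sub {g : ℕ → ℝ} (hg : g 0 = 0) (t : ℕ) :
    (avoidsZeroUntil X t).indicator (fun ω => g (X t ω) - g (X (t + 1) ω)) =
      (avoidsZeroUntil X t).indicator (fun ω => g (X t ω)) -
        (avoidsZeroUntil X (t + 1)).indicator (fun ω => g (X (t + 1) ω)) := by
  ext ω
  rw [avoidsZeroUntil_succ]
  by_cases hω : ω ∈ avoidsZeroUntil X t <;> by_cases hX : X (t + 1) ω = 0 <;> simp [hω, hX, hg]

theorem measureReal_avoidsZeroUntil_le_integral_sub [IsFiniteMeasure μ] {ℱ : Filtration ℕ m}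
    {n : ℕ} (hbdd : ∀ t ω, X t ω ≤ n) (hadapted : ∀ t, Measurable[ℱ t] (X t)) {h : ℕ → ℝ}
    (hpos : ∀ i, 1 ≤ i → i ≤ n → 0 < h i)
    (hmono : ∀ i j, 1 ≤ i → i ≤ j → j ≤ n → h i ≤ h j) {t : ℕ}
    (hdrift : ∀ᵐ ω ∂μ, ω ∈ avoidsZeroUntil X t →
      h (X t ω) ≤ (μ[fun ω' => (X t ω' : ℝ) - (X (t + 1) ω' : ℝ) | ℱ t]) ω) :
    μ.real (avoidsZeroUntil X t) ≤
      ∫ ω, (avoidsZeroUntil X t).indicator (fun ω => variableDriftPotential h (X t ω)) ω ∂μ -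
        ∫ ω, (avoidsZeroUntil X (t + 1)).indicator
          (fun ω => variableDriftPotential h (X (t + 1) ω)) ω ∂μ := by
  set g := variableDriftPotential h
  have hXm (s : ℕ) : Measurable (X s) := (hadapted s).mono (ℱ.le s) le_rfl
  have hA (s : ℕ) : MeasurableSet (avoidsZeroUntil X s) :=
    ℱ.le s _ (measurableSet_avoidsZeroUntil hadapted s)
  have hX_mem (s : ℕ) (ω : Ω) : X s ω ∈ Finset.range (n + 1) :=
    Finset.mem_range.2 (Nat.lt_succ_of_le (hbdd s ω))
  have hfX (s : ℕ) (f : ℕ → ℝ) : Integrable (fun ω => f (X s ω)) μ :=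
    integrable_comp_of_forall_mem_finset (hXm s) (hX_mem s) f
  have hXt_mem {ω : Ω} (hω : ω ∈ avoidsZeroUntil X t) : 1 ≤ X t ω :=
    Nat.one_le_iff_ne_zero.2 (hω t le_rfl)
  calc μ.real (avoidsZeroUntil X t)
      ≤ ∫ ω in avoidsZeroUntil X t, ((X t ω : ℝ) - X (t + 1) ω) / h (X t ω) ∂μ := by
        refine measureReal_le_setIntegral_div_of_le_condExp (ℱ.le t)
          (measurableSet_avoidsZeroUntil hadapted t) (measurable_from_nat.comp (hadapted t))
          (fun ω hω => hpos _ (hXt_mem hω) (hbdd t ω))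
          (fun ω hω => one_div (h (X t ω)) ▸
            one_div_le_variableDriftPotential hpos (hXt_mem hω) (hbdd t ω))
          ((hfX t Nat.cast).sub (hfX (t + 1) Nat.cast)) hdrift
    _ ≤ ∫ ω in avoidsZeroUntil X t, (g (X t ω) - g (X (t + 1) ω)) ∂μ := by
        have hquot : Integrable (fun ω => ((X t ω : ℝ) - X (t + 1) ω) / h (X t ω)) μ :=
          integrable_comp_of_forall_mem_finset ((hXm t).prodMk (hXm (t + 1)))
            (S := Finset.range (n + 1) ×ˢ Finset.range (n + 1))
            (fun ω => Finset.mem_product.2 ⟨hX_mem t ω, hX_mem (t + 1) ω⟩)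
            (fun p => ((p.1 : ℝ) - p.2) / h p.1)
        exact setIntegral_mono_on hquot.integrableOn ((hfX t g).sub (hfX (t + 1) g)).integrableOn
          (hA t) fun ω hω => sub_div_le_variableDriftPotential_sub hpos hmono (hXt_mem hω)
            (hbdd t ω) (hbdd (t + 1) ω)
    _ = _ := by
        rw [← integral_indicator (hA t), indicator_avoidsZeroUntil_sub variableDriftPotential_zero,
          Pi.sub_def, integral_sub ((hfX t g).indicator (hA t)) ((hfX (t + 1) g).indicator (hA _))]

end HittingZero

theorem discrete_variable_drift_upper_bound_general
    {Ω : Type*} {m : MeasurableSpace Ω} (μ : Measure Ω) [IsProbabilityMeasure μ]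
    (ℱ : Filtration ℕ m) (n : ℕ) (X : ℕ → Ω → ℕ)
    (hbdd : ∀ t ω, X t ω ≤ n)
    (hadapted : ∀ t, Measurable[ℱ t] (X t))
    (x₀ : ℕ) (hX0 : ∀ᵐ ω ∂μ, X 0 ω = x₀)
    (h : ℕ → ℝ)
    (hpos : ∀ i, 1 ≤ i → i ≤ n → 0 < h i)
    (hmono : ∀ i j, 1 ≤ i → i ≤ j → j ≤ n → h i ≤ h j)
    (hdrift : ∀ t : ℕ, ∀ᵐ ω ∂μ, (∀ s ≤ t, X s ω ≠ 0) →
        h (X t ω)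
          ≤ (μ[fun ω' => (X t ω' : ℝ) - (X (t + 1) ω' : ℝ) | ℱ t]) ω) :
    ∑' t : ℕ, μ {ω | ∀ s ≤ t, X s ω ≠ 0}
      ≤ ENNReal.ofReal (∑ i ∈ Finset.Icc 1 x₀, 1 / h i) := by
  set Φ : ℕ → Ω → ℝ := fun t =>
    (avoidsZeroUntil X t).indicator fun ω => variableDriftPotential h (X t ω)
  have hg_nonneg (t : ℕ) (ω : Ω) : 0 ≤ variableDriftPotential h (X t ω) :=
    variableDriftPotential_nonneg hpos (hbdd t ω)
  have hΦ_nonneg (t : ℕ) : 0 ≤ Φ t := Set.indicator_nonneg fun ω _ => hg_nonneg t ω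
  have hΦ_zero : ∫ ω, Φ 0 ω ∂μ ≤ variableDriftPotential h x₀ :=
    calc ∫ ω, Φ 0 ω ∂μ ≤ ∫ _ω, variableDriftPotential h x₀ ∂μ := by
          refine integral_mono_of_nonneg (ae_of_all _ (hΦ_nonneg 0)) (integrable_const _) ?_
          filter_upwards [hX0] with ω hω
          exact hω ▸ Set.indicator_le_self' (fun ω _ => hg_nonneg 0 ω) ω
      _ = variableDriftPotential h x₀ := by simp
  refine tsum_measure_le_ofReal_of_sum_measureReal_le fun N =>
    (Finset.sum_range_le_of_le_sub_succ (b := fun t => ∫ ω, Φ t ω ∂μ) (fun t => ?_)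
      (integral_nonneg (hΦ_nonneg N))).trans hΦ_zero
  exact measureReal_avoidsZeroUntil_le_integral_sub hbdd hadapted hpos hmono (hdrift t)

/-- **Theorem (discrete variable drift, upper bound).** Let `(X_t)` be a process with
values in `{0, …, n}`, adapted to a filtration `(ℱ_t)`, with `X₀ = x₀` a.s., and let
`T = inf {t | X_t = 0}`. If `h : {1, …, n} → ℝ_{>0}` is monotonically increasing and
for all `t`, a.s. on the event `{t < T}`, `E[X_t − X_{t+1} | ℱ_t] ≥ h(X_t)`, then
`E[T] ≤ Σ_{i=1}^{x₀} 1/h(i)`, where `E[T] = Σ_{t≥0} Pr[T > t]`. -/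
theorem discrete_variable_drift_upper_bound
    {Ω : Type*} {m : MeasurableSpace Ω} (μ : Measure Ω) [IsProbabilityMeasure μ]
    (ℱ : Filtration ℕ m) (n : ℕ) (X : ℕ → Ω → ℕ)
    (hbdd : ∀ t ω, X t ω ≤ n)
    (hadapted : ∀ t, Measurable[ℱ t] (X t))
    (x₀ : ℕ) (hx₀ : x₀ ≤ n) (hX0 : ∀ᵐ ω ∂μ, X 0 ω = x₀)
    (h : ℕ → ℝ)
    (hpos : ∀ i, 1 ≤ i → i ≤ n → 0 < h i)
    (hmono : ∀ i j, 1 ≤ i → i ≤ j → j ≤ n → h i ≤ h j)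
    (hdrift : ∀ t : ℕ, ∀ᵐ ω ∂μ, (∀ s ≤ t, X s ω ≠ 0) →
        h (X t ω)
          ≤ (μ[fun ω' => (X t ω' : ℝ) - (X (t + 1) ω' : ℝ) | ℱ t]) ω) :
    ∑' t : ℕ, μ {ω | ∀ s ≤ t, X s ω ≠ 0}
      ≤ ENNReal.ofReal (∑ i ∈ Finset.Icc 1 x₀, 1 / h i) :=
  discrete_variable_drift_upper_bound_general μ ℱ n X hbdd hadapted x₀ hX0 h hpos hmono hdrift
end

section
/- (Additive drift, unbounded search space.) Let (X_t)_{t∈ℕ} be a sequence of nonnegative real-valued random variables adapted to a filtration (F_t)_{t≥0}, with X₀ = x₀ almost surely for a fixed x₀ ≥ 0, and let T = inf{t ∈ ℕ : X_t = 0}. Suppose there exists δ > 0 such that for every t ∈ ℕ, almost surely on the event {t < T}, E[X_t − X_{t+1} | F_t] ≥ δ. Then E[T] ≤ x₀ / δ. -/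
/-!
On the event `A t = {T > t}` the drift condition gives, after integrating the conditional
expectation over the `ℱ t`-measurable set `A t`,
`δ · P(A t) + E[X_{t+1}; A (t+1)] ≤ δ · P(A t) + E[X_{t+1}; A t] ≤ E[X_t; A t]`,
using `A (t+1) ⊆ A t` and `X ≥ 0`. Telescoping, `δ · ∑_{t<n} P(T > t) ≤ E[X_0] = x₀` for
every `n`, which bounds the series `E[T] = ∑_t P(T > t)`.
-/

open MeasureTheory Finset

theorem MeasureTheory.Adapted.measurableSet_forall_le_mem {Ω ι β : Type*}
    {m : MeasurableSpace Ω} [Preorder ι] [Countable ι] [MeasurableSpace β] {ℱ : Filtration ι m} {X : ι → Ω → β}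
    (hX : Adapted ℱ X) {S : Set β} (hS : MeasurableSet S) (t : ι) :
    MeasurableSet[ℱ t] {ω | ∀ s ≤ t, X s ω ∈ S} := by
  have hinter : {ω | ∀ s ≤ t, X s ω ∈ S} = ⋂ s ∈ Set.Iic t, X s ⁻¹' S := by
    ext ω
    simp
  rw [hinter]
  exact .biInter (Set.to_countable _) fun s hs => (hX s).mono (ℱ.mono hs) le_rfl hS

theorem mul_measureReal_le_setIntegral_of_le_condExp {Ω : Type*} {m m₀ : MeasurableSpace Ω}
    {μ : Measure Ω} [IsFiniteMeasure μ] (hm : m ≤ m₀) [SigmaFinite (μ.trim hm)]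
    {f : Ω → ℝ} (hf : Integrable f μ) {A : Set Ω} (hA : MeasurableSet[m] A) {δ : ℝ}
    (hδ : ∀ᵐ ω ∂μ, ω ∈ A → δ ≤ μ[f | m] ω) :
    δ * μ.real A ≤ ∫ ω in A, f ω ∂μ := by
  rw [← setIntegral_condExp hm hf hA, mul_comm, ← smul_eq_mul, ← setIntegral_const]
  exact setIntegral_mono_on_ae (integrableOn_const (measure_ne_top μ A))
    integrable_condExp.integrableOn (hm A hA) hδ

theorem mul_measureReal_add_setIntegral_le_of_le_condExp {Ω : Type*} {m m₀ : MeasurableSpace Ω}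
    {μ : Measure Ω} [IsFiniteMeasure μ] (hm : m ≤ m₀) [SigmaFinite (μ.trim hm)]
    {Y Z : Ω → ℝ} (hY : Integrable Y μ) (hZ : Integrable Z μ) (hZ_nonneg : 0 ≤ᵐ[μ] Z)
    {A B : Set Ω} (hA : MeasurableSet[m] A) (hBA : B ⊆ A) {δ : ℝ}
    (hδ : ∀ᵐ ω ∂μ, ω ∈ A → δ ≤ μ[Y - Z | m] ω) :
    δ * μ.real A + ∫ ω in B, Z ω ∂μ ≤ ∫ ω in A, Y ω ∂μ := by
  have hdrift := mul_measureReal_le_setIntegral_of_le_condExp hm (hY.sub hZ) hA hδ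
  have hBA_int : ∫ ω in B, Z ω ∂μ ≤ ∫ ω in A, Z ω ∂μ :=
    setIntegral_mono_set hZ.integrableOn (ae_restrict_of_ae hZ_nonneg) (.of_forall hBA)
  simp only [Pi.sub_apply] at hdrift
  rw [integral_sub hY.integrableOn hZ.integrableOn] at hdrift
  linarith

theorem sum_range_add_le_of_forall_add_le {a g : ℕ → ℝ} (h : ∀ t, a t + g (t + 1) ≤ g t)
    (n : ℕ) : ∑ t ∈ range n, a t + g n ≤ g 0 := by
  induction n with
  | zero => simp
  | succ n ih =>
    rw [sum_range_succ]
    linarith [h n]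

theorem additive_drift_unbounded_general
    {Ω : Type*} {m : MeasurableSpace Ω} (μ : Measure Ω) [IsProbabilityMeasure μ]
    (ℱ : Filtration ℕ m) (X : ℕ → Ω → ℝ)
    (hnonneg : ∀ t ω, 0 ≤ X t ω)
    (hadapted : Adapted ℱ X)
    (hint : ∀ t, Integrable (X t) μ)
    (x₀ : ℝ) (hX0 : ∀ᵐ ω ∂μ, X 0 ω = x₀)
    (δ : ℝ) (hδ : 0 < δ)
    (hdrift : ∀ t : ℕ, ∀ᵐ ω ∂μ, (∀ s ≤ t, X s ω ≠ 0) →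
        δ ≤ (μ[X t - X (t + 1) | ℱ t]) ω) :
    ∑' t : ℕ, μ {ω | ∀ s ≤ t, X s ω ≠ 0} ≤ ENNReal.ofReal (x₀ / δ) := by
  set A : ℕ → Set Ω := fun t => {ω | ∀ s ≤ t, X s ω ≠ 0}
  have hA (t : ℕ) : MeasurableSet[ℱ t] (A t) :=
    hadapted.measurableSet_forall_le_mem (measurableSet_singleton 0).compl t
  have hA_succ (t : ℕ) : A (t + 1) ⊆ A t := fun _ hω s hs => hω s (by omega)
  have hstep (t : ℕ) : δ * μ.real (A t) + ∫ ω in A (t + 1), X (t + 1) ω ∂μ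
      ≤ ∫ ω in A t, X t ω ∂μ :=
    mul_measureReal_add_setIntegral_le_of_le_condExp (ℱ.le t) (hint t) (hint (t + 1))
      (.of_forall (hnonneg (t + 1))) (hA t) (hA_succ t) (hdrift t)
  have hstart : ∫ ω in A 0, X 0 ω ∂μ ≤ x₀ := by
    calc ∫ ω in A 0, X 0 ω ∂μ ≤ ∫ ω, X 0 ω ∂μ :=
          setIntegral_le_integral (hint 0) (.of_forall (hnonneg 0))
      _ = x₀ := by simp [integral_congr_ae hX0]
  refine ENNReal.tsum_le_of_sum_range_le fun n => ?_
  have hsum : δ * ∑ t ∈ range n, μ.real (A t) ≤ x₀ := by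
    have htele := sum_range_add_le_of_forall_add_le
      (g := fun t => ∫ ω in A t, X t ω ∂μ) hstep n
    have htail : 0 ≤ ∫ ω in A n, X n ω ∂μ := setIntegral_nonneg_of_ae (.of_forall (hnonneg n))
    rw [mul_sum]
    linarith
  rw [← ENNReal.ofReal_toReal (ENNReal.sum_ne_top.2 fun t _ => measure_ne_top μ (A t)),
    ENNReal.toReal_sum fun t _ => measure_ne_top μ (A t)]
  exact ENNReal.ofReal_le_ofReal ((le_div_iff₀' hδ).2 hsum)

/-- **Theorem (additive drift, unbounded search space).** Let `(X_t)` be nonnegative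
real-valued integrable random variables adapted to a filtration `(ℱ_t)`, with
`X₀ = x₀` a.s., and let `T = inf {t | X_t = 0}`. If there is `δ > 0` such that for all
`t`, a.s. on the event `{t < T}`, `E[X_t − X_{t+1} | ℱ_t] ≥ δ`, then `E[T] ≤ x₀/δ`,
where `E[T] = Σ_{t≥0} Pr[T > t]`. -/
theorem additive_drift_unbounded
    {Ω : Type*} {m : MeasurableSpace Ω} (μ : Measure Ω) [IsProbabilityMeasure μ]
    (ℱ : Filtration ℕ m) (X : ℕ → Ω → ℝ)
    (hnonneg : ∀ t ω, 0 ≤ X t ω)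
    (hadapted : Adapted ℱ X)
    (hint : ∀ t, Integrable (X t) μ)
    (x₀ : ℝ) (hx₀ : 0 ≤ x₀) (hX0 : ∀ᵐ ω ∂μ, X 0 ω = x₀)
    (δ : ℝ) (hδ : 0 < δ)
    (hdrift : ∀ t : ℕ, ∀ᵐ ω ∂μ, (∀ s ≤ t, X s ω ≠ 0) →
        δ ≤ (μ[X t - X (t + 1) | ℱ t]) ω) :
    ∑' t : ℕ, μ {ω | ∀ s ≤ t, X s ω ≠ 0} ≤ ENNReal.ofReal (x₀ / δ) :=
  additive_drift_unbounded_general μ ℱ X hnonneg hadapted hint x₀ hX0 δ hδ hdrift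
end
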